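/- Let Γ ⊂ ℂ be compact, symmetric in the sense that Γ̃ = { z : z² ∈ Γ }, and let μ be a finite measure on Γ with 0 ∈ Γ. Define the measure μ̃ on Γ̃ as the even measure with μ̃(E) = (1/2) μ(E²) for Borel E contained in one 'half' of Γ̃ (where E² = {z² : z ∈ E}). Then for every n ≥ 1, λ_{2n}(μ̃, 0) = λ_n(μ, 0), where λ denotes the Christoffel function at 0. -/

import Mathlib

open MeasureTheory Polynomial

/-!
Symmetrizing a competitor `Q` for `λ_{2n}(μ̃, 0)` gives `(Q(z) + Q(-z))/2 = R(z²)` with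
`deg R ≤ n` and `R(0) = Q(0)`; since `μ̃` is even, convexity of `|·|²` shows that `R(z²)` has
no larger `L²(μ̃)` norm than `Q`. Conversely `P ↦ P(z²)` turns competitors for `λ_n(μ, 0)` into
competitors for `λ_{2n}(μ̃, 0)` of the same norm, because `μ` is the image of `μ̃` under `z ↦ z²`.
-/

/-- The Christoffel function `λ_n(μ, z₀)`. -/
noncomputable def christoffel (μ : Measure ℂ) (n : ℕ) (z₀ : ℂ) : ENNReal :=
  sInf { r : ENNReal | ∃ P : Polynomial ℂ, P.natDegree ≤ n ∧ P.eval z₀ = 1 ∧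
    r = ∫⁻ z, (‖P.eval z‖₊ : ENNReal) ^ 2 ∂μ }

namespace Polynomial

variable {R : Type*}

theorem natDegree_contract_le [CommSemiring R] {p : ℕ} (hp : p ≠ 0) (f : R[X]) :
    (contract p f).natDegree ≤ f.natDegree / p :=
  natDegree_le_iff_coeff_eq_zero.2 fun k hk => by
    rw [coeff_contract hp]
    exact coeff_eq_zero_of_natDegree_lt ((Nat.div_lt_iff_lt_mul (Nat.pos_of_ne_zero hp)).1 hk)

theorem eval_add_eval_neg_eq_contract [CommRing R] (f : R[X]) (z : R) :
    f.eval z + f.eval (-z) = 2 * (contract 2 f).eval (z ^ 2) := by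
  induction f using Polynomial.induction_on' with
  | add p q hp hq => simp only [contract_add two_ne_zero, eval_add, mul_add, ← hp, ← hq]; ring
  | monomial i a =>
    obtain ⟨j, rfl | rfl⟩ := Nat.even_or_odd' i
    · have : contract 2 (monomial (2 * j) a) = monomial j a := by
        rw [mul_comm, ← expand_monomial, contract_expand 2 two_ne_zero]
      simp only [this, eval_monomial, pow_mul, neg_sq]
      ring
    · have : contract 2 (monomial (2 * j + 1) a) = 0 := by
        ext k
        rw [coeff_contract two_ne_zero, coeff_monomial, if_neg (by omega), coeff_zero]
      simp only [this, eval_monomial, eval_zero, pow_succ, pow_mul]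
      ring

end Polynomial

theorem nnnorm_add_sq_le {E : Type*} [SeminormedAddGroup E] (u v : E) :
    (‖u + v‖₊ : ENNReal) ^ 2 ≤ 2 * ((‖u‖₊ : ENNReal) ^ 2 + (‖v‖₊ : ENNReal) ^ 2) := by
  have h : ‖u + v‖₊ ^ 2 ≤ 2 * (‖u‖₊ ^ 2 + ‖v‖₊ ^ 2) :=
    (pow_le_pow_left₀ zero_le (nnnorm_add_le u v) 2).trans add_sq_le
  exact_mod_cast h

theorem lintegral_nnnorm_add_comp_neg_sq_le {G E : Type*} [MeasurableSpace G] [InvolutiveNeg G]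
    [MeasurableNeg G] [SeminormedAddGroup E] [MeasurableSpace E] [OpensMeasurableSpace E]
    {μ : Measure G} [μ.IsNegInvariant] {f : G → E}
    (hf : Measurable f) :
    ∫⁻ x, (‖f x + f (-x)‖₊ : ENNReal) ^ 2 ∂μ ≤ 4 * ∫⁻ x, (‖f x‖₊ : ENNReal) ^ 2 ∂μ :=
  calc ∫⁻ x, (‖f x + f (-x)‖₊ : ENNReal) ^ 2 ∂μ
      ≤ ∫⁻ x, 2 * ((‖f x‖₊ : ENNReal) ^ 2 + (‖f (-x)‖₊ : ENNReal) ^ 2) ∂μ :=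
        lintegral_mono fun x => nnnorm_add_sq_le _ _
    _ = 2 * (∫⁻ x, (‖f x‖₊ : ENNReal) ^ 2 ∂μ + ∫⁻ x, (‖f (-x)‖₊ : ENNReal) ^ 2 ∂μ) := by
        rw [lintegral_const_mul' _ _ ENNReal.ofNat_ne_top,
          lintegral_add_left (by fun_prop)]
    _ = 4 * ∫⁻ x, (‖f x‖₊ : ENNReal) ^ 2 ∂μ := by
        rw [lintegral_neg_eq_self (fun x => (‖f x‖₊ : ENNReal) ^ 2), ← two_mul, ← mul_assoc]
        norm_num

section Christoffel

variable {μ : Measure ℂ} {n : ℕ} {z₀ : ℂ}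

theorem christoffel_le_lintegral {P : ℂ[X]} (hP : P.natDegree ≤ n) (h1 : P.eval z₀ = 1) :
    christoffel μ n z₀ ≤ ∫⁻ z, (‖P.eval z‖₊ : ENNReal) ^ 2 ∂μ :=
  sInf_le ⟨P, hP, h1, rfl⟩

theorem le_christoffel {r : ENNReal}
    (h : ∀ P : ℂ[X], P.natDegree ≤ n → P.eval z₀ = 1 → r ≤ ∫⁻ z, (‖P.eval z‖₊ : ENNReal) ^ 2 ∂μ) :
    r ≤ christoffel μ n z₀ :=
  le_sInf fun _ ⟨P, hP, h1, hr⟩ => hr ▸ h P hP h1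

theorem christoffel_mul_le_map_pow (μ : Measure ℂ) (k n : ℕ) (z₀ : ℂ) :
    christoffel μ (k * n) z₀ ≤ christoffel (μ.map (· ^ k)) n (z₀ ^ k) :=
  le_christoffel fun P hP h1 => by
    rw [lintegral_map (by fun_prop) (by fun_prop)]
    refine (christoffel_le_lintegral (P := expand ℂ k P) ?_ ?_).trans_eq ?_
    · rw [natDegree_expand, mul_comm]
      exact Nat.mul_le_mul_left k hP
    · rwa [expand_eval]
    · simp only [expand_eval]

theorem christoffel_map_sq_le (μ : Measure ℂ) [μ.IsNegInvariant] (n : ℕ) :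
    christoffel (μ.map (· ^ 2)) n 0 ≤ christoffel μ (2 * n) 0 :=
  le_christoffel fun Q hQ h1 => by
    have hsym := eval_add_eval_neg_eq_contract Q
    refine christoffel_le_lintegral (P := contract 2 Q) ?_ ?_ |>.trans ?_
    · exact (natDegree_contract_le two_ne_zero Q).trans (Nat.div_le_of_le_mul hQ)
    · have hR0 : (2 : ℂ) * (contract 2 Q).eval 0 = 2 * 1 := by
        simpa [h1, one_add_one_eq_two] using (hsym 0).symm
      exact mul_left_cancel₀ two_ne_zero hR0
    · have hnorm : ∀ z, 4 * (‖(contract 2 Q).eval (z ^ 2)‖₊ : ENNReal) ^ 2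
          = (‖Q.eval z + Q.eval (-z)‖₊ : ENNReal) ^ 2 := fun z => by
        rw [hsym z, nnnorm_mul]
        push_cast
        norm_num [mul_pow]
      rw [lintegral_map (by fun_prop) (by fun_prop),
        ← ENNReal.mul_le_mul_iff_right four_ne_zero ENNReal.ofNat_ne_top,
        ← lintegral_const_mul' _ _ ENNReal.ofNat_ne_top]
      simp_rw [hnorm]
      exact lintegral_nnnorm_add_comp_neg_sq_le (f := fun z => Q.eval z) (by fun_prop)

end Christoffel

theorem christoffel_double_angle_general
    (μ μt : Measure ℂ)
    (hpush : Measure.map (fun z : ℂ => z ^ 2) μt = μ)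
    (heven : Measure.map (fun z : ℂ => -z) μt = μt)
    (n : ℕ) :
    christoffel μt (2 * n) 0 = christoffel μ n 0 := by
  have : μt.IsNegInvariant := ⟨heven⟩
  subst hpush
  exact le_antisymm (by simpa using christoffel_mul_le_map_pow μt 2 n 0)
    (christoffel_map_sq_le μt n)

/-- Symmetrization identity: let `μ` be a finite measure on a compact set `Γ ∋ 0` and
let `μ̃` be the even measure on `Γ̃ = {z : z² ∈ Γ}` with `μ̃(E) = (1/2) μ(E²)` for `E`
in one half of `Γ̃` — equivalently, `μ̃` is invariant under `z ↦ -z` and pushes forward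
to `μ` under `z ↦ z²`.  Then `λ_{2n}(μ̃, 0) = λ_n(μ, 0)` for every `n ≥ 1`. -/
theorem christoffel_double_angle
    (Γ : Set ℂ) (hΓ : IsCompact Γ) (h0 : (0 : ℂ) ∈ Γ)
    (μ μt : Measure ℂ) [IsFiniteMeasure μ] [IsFiniteMeasure μt]
    (hμsupp : μ Γᶜ = 0) (hμtsupp : μt {z : ℂ | z ^ 2 ∈ Γ}ᶜ = 0)
    (hpush : Measure.map (fun z : ℂ => z ^ 2) μt = μ)
    (heven : Measure.map (fun z : ℂ => -z) μt = μt)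
    (n : ℕ) (hn : 1 ≤ n) :
    christoffel μt (2 * n) 0 = christoffel μ n 0 :=
  christoffel_double_angle_general μ μt hpush heven n
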